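/- arXiv:2411.02707 — 6 statements merged into one kernel-verified Lean document; each statement's English description precedes it below -/
import Mathlib

section
/- If Φ : M → M is a unital 2-positive linear map on a C*-algebra M and x ∈ M, then Φ(x)*Φ(x) ≤ Φ(x*x) (the Kadison–Schwarz inequality), and consequently if there is a faithful state ω with ω∘Φ = ω and Φ(x) = αx with |α| = 1, then Φ(x*x) = x*x. -/
/-!
Applying 2-positivity to the positive block matrix
`[[1, x], [xᴴ, xᴴ x]] = [[1, x], [0, 0]]ᴴ [[1, x], [0, 0]]` gives the positive block matrix
`[[1, Φ x], [(Φ x)ᴴ, Φ (xᴴ x)]]`, whose Schur complement `Φ (xᴴ x) - (Φ x)ᴴ Φ x` is therefore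
positive. If `Φ x = α x` with `|α| = 1`, then `(Φ x)ᴴ Φ x = xᴴ x`, so this positive Schur
complement is annihilated by the invariant state `ω`, and faithfulness forces it to vanish.
-/

open Matrix Complex ComplexOrder

variable {n : Type*} [Fintype n] [DecidableEq n]

/-- Apply `Φ` entrywise to the `m × m` blocks of a block matrix. -/
def blockApply (m : ℕ) (Φ : Matrix n n ℂ →ₗ[ℂ] Matrix n n ℂ)
    (A : Matrix (Fin m × n) (Fin m × n) ℂ) : Matrix (Fin m × n) (Fin m × n) ℂ :=
  Matrix.of fun p q => Φ (Matrix.of fun a b => A (p.1, a) (q.1, b)) p.2 q.2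

/-- `Φ` is 2-positive. -/
def IsTwoPositive (Φ : Matrix n n ℂ →ₗ[ℂ] Matrix n n ℂ) : Prop :=
  ∀ A : Matrix (Fin 2 × n) (Fin 2 × n) ℂ, A.PosSemidef → (blockApply 2 Φ A).PosSemidef

/-- `(0, a) ↦ inl a`, `(1, a) ↦ inr a`: the block indexing of `blockApply 2` versus `fromBlocks`. -/
def finTwoProdEquivSum (α : Type*) : Fin 2 × α ≃ α ⊕ α :=
  (Equiv.prodCongr finTwoEquiv (Equiv.refl α)).trans (Equiv.boolProdEquivSum α)

theorem blockApply_two_submatrix_fromBlocks {m : Type*} (Φ : Matrix m m ℂ →ₗ[ℂ] Matrix m m ℂ)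
    (A B C D : Matrix m m ℂ) :
    blockApply 2 Φ ((fromBlocks A B C D).submatrix (finTwoProdEquivSum m) (finTwoProdEquivSum m)) =
      (fromBlocks (Φ A) (Φ B) (Φ C) (Φ D)).submatrix (finTwoProdEquivSum m)
        (finTwoProdEquivSum m) := by
  ext ⟨i, a⟩ ⟨j, b⟩
  fin_cases i <;> fin_cases j <;> rfl

theorem posSemidef_fromBlocks_one_conjTranspose_mul_self {m R : Type*} [Fintype m]
    [CommRing R] [PartialOrder R] [StarRing R] [StarOrderedRing R] (x : Matrix n m R) :
    (fromBlocks 1 x xᴴ (xᴴ * x)).PosSemidef := by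
  have : fromBlocks 1 x xᴴ (xᴴ * x) = (fromBlocks 1 x 0 0 : Matrix (n ⊕ m) (n ⊕ m) R)ᴴ *
      fromBlocks 1 x 0 0 := by
    simp [fromBlocks_conjTranspose, fromBlocks_multiply]
  exact this ▸ posSemidef_conjTranspose_mul_self _

theorem conjTranspose_smul_mul_smul_of_norm_eq_one {l m 𝕜 : Type*} [Fintype l] [RCLike 𝕜] {α : 𝕜}
    (hα : ‖α‖ = 1) (x : Matrix l m 𝕜) : (α • x)ᴴ * (α • x) = xᴴ * x := by
  have : star α * α = 1 := by rw [RCLike.star_def, RCLike.conj_mul, hα]; norm_num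
  rw [conjTranspose_smul, Matrix.smul_mul, Matrix.mul_smul, smul_smul, this, one_smul]

theorem IsTwoPositive.posSemidef_fromBlocks {m : Type*} {Φ : Matrix m m ℂ →ₗ[ℂ] Matrix m m ℂ}
    (h2p : IsTwoPositive Φ) {A B C D : Matrix m m ℂ} (hM : (fromBlocks A B C D).PosSemidef) :
    (fromBlocks (Φ A) (Φ B) (Φ C) (Φ D)).PosSemidef := by
  rw [← posSemidef_submatrix_equiv (finTwoProdEquivSum m), ← blockApply_two_submatrix_fromBlocks]
  exact h2p _ (hM.submatrix _)

namespace IsTwoPositive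

variable {Φ : Matrix n n ℂ →ₗ[ℂ] Matrix n n ℂ}

theorem map_conjTranspose (h2p : IsTwoPositive Φ) (x : Matrix n n ℂ) : Φ xᴴ = (Φ x)ᴴ :=
  (isHermitian_fromBlocks_iff.mp
    (h2p.posSemidef_fromBlocks (posSemidef_fromBlocks_one_conjTranspose_mul_self x)).isHermitian
    ).2.1.symm

theorem kadison_schwarz (h2p : IsTwoPositive Φ) (hΦ1 : Φ 1 = 1) (x : Matrix n n ℂ) :
    (Φ (xᴴ * x) - (Φ x)ᴴ * Φ x).PosSemidef := by
  have hM := h2p.posSemidef_fromBlocks (posSemidef_fromBlocks_one_conjTranspose_mul_self x)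
  rw [hΦ1, h2p.map_conjTranspose] at hM
  have : Invertible (1 : Matrix n n ℂ) := invertibleOne
  simpa using (PosDef.fromBlocks₁₁ (Φ x) (Φ (xᴴ * x)) PosDef.one).mp hM

theorem map_conjTranspose_mul_self_of_map_eq_smul (h2p : IsTwoPositive Φ) (hΦ1 : Φ 1 = 1)
    {ω : Matrix n n ℂ →ₗ[ℂ] ℂ} (hω : ∀ y, y.PosSemidef → ω y = 0 → y = 0)
    (hωΦ : ∀ y, ω (Φ y) = ω y) {α : ℂ} (hα : ‖α‖ = 1) {x : Matrix n n ℂ} (hx : Φ x = α • x) :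
    Φ (xᴴ * x) = xᴴ * x := by
  have hsq : (Φ x)ᴴ * Φ x = xᴴ * x := hx ▸ conjTranspose_smul_mul_smul_of_norm_eq_one hα x
  have hks := h2p.kadison_schwarz hΦ1 x
  rw [hsq] at hks
  exact sub_eq_zero.mp (hω _ hks (by rw [map_sub, hωΦ, sub_self]))

end IsTwoPositive

/-- Kadison–Schwarz inequality for unital 2-positive maps, and the consequence that if
`ω` is a faithful invariant state and `Φ x = α • x` with `|α| = 1`, then `Φ (x* x) = x* x`. -/
theorem stmt0 (Φ : Matrix n n ℂ →ₗ[ℂ] Matrix n n ℂ)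
    (hΦ1 : Φ 1 = 1) (h2p : IsTwoPositive Φ) (x : Matrix n n ℂ) :
    (Φ (xᴴ * x) - (Φ x)ᴴ * Φ x).PosSemidef ∧
    (∀ (ω : Matrix n n ℂ →ₗ[ℂ] ℂ) (α : ℂ),
      (∀ y, y.PosSemidef → 0 ≤ ω y) →
      (∀ y, y.PosSemidef → ω y = 0 → y = 0) →
      (∀ y, ω (Φ y) = ω y) →
      ‖α‖ = 1 → Φ x = α • x → Φ (xᴴ * x) = xᴴ * x) :=
  ⟨h2p.kadison_schwarz hΦ1 x, fun _ _ _ hω hωΦ hα hx =>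
    h2p.map_conjTranspose_mul_self_of_map_eq_smul hΦ1 hω hωΦ hα hx⟩
end

section
/- Let Φ be a unital completely positive trace-preserving map on Matrix n n ℂ. Then the Cesàro averages (1/N)∑_{k=1}^{N} Φ^k converge (along any convergent subsequence; in finite dimensions the limit exists) to a positive linear projection E onto the fixed-point space of Φ, satisfying E∘Φ = Φ∘E = E and E∘E = E. -/
open Matrix Complex ComplexOrder Filter

variable {n : Type*} [Fintype n] [DecidableEq n]

/-- `Φ` is completely positive. -/
def IsCompletelyPositive (Φ : Matrix n n ℂ →ₗ[ℂ] Matrix n n ℂ) : Prop :=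
  ∀ (m : ℕ) (A : Matrix (Fin m × n) (Fin m × n) ℂ), A.PosSemidef → (blockApply m Φ A).PosSemidef

open Bornology Function Topology

/-!
Positivity and trace preservation keep every orbit `k ↦ Φ^k x` bounded: the entries of a positive
semidefinite matrix are bounded by its trace, and such matrices span all matrices. For a
power-bounded operator `T` the Cesàro means of `T z - z` telescope to `0`, so `ker (T - 1)` meets
`range (T - 1)` only in `0`; by rank–nullity the two are complementary, and the means converge to
the projection onto the fixed points along `range (T - 1)`. That projection is positive because
it is a limit of averages of positive matrices and the positive semidefinite cone is closed.
-/

namespace Module.End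

theorem sum_Icc_pow_apply_eq_birkhoffSum {R M : Type*} [Semiring R] [AddCommMonoid M] [Module R M]
    (f : Module.End R M) (N : ℕ) (x : M) :
    ∑ k ∈ Finset.Icc 1 N, (f ^ k) x = birkhoffSum f id N (f x) := by
  rw [birkhoffSum, Finset.range_eq_Ico, ← Finset.Ico_add_one_right_eq_Icc, ← zero_add 1,
    ← Finset.sum_Ico_add']
  simp only [id, pow_succ, mul_apply, pow_apply]

end Module.End

namespace LinearMap

section Projection

variable {R M : Type*} [Ring R] [AddCommGroup M] [Module R M] {f : M →ₗ[R] M}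
  (h : IsCompl (ker (f - 1)) (range (f - 1)))

theorem projection_ker_sub_one_comp_self :
    (ker (f - 1)).projection (range (f - 1)) h ∘ₗ f =
      (ker (f - 1)).projection (range (f - 1)) h := by
  ext x
  rw [comp_apply, ← sub_eq_zero, ← map_sub, Submodule.projection_apply_eq_zero_iff]
  exact ⟨x, rfl⟩

theorem comp_projection_ker_sub_one :
    f ∘ₗ (ker (f - 1)).projection (range (f - 1)) h =
      (ker (f - 1)).projection (range (f - 1)) h := by
  ext x
  have := Submodule.projection_apply_mem h x
  rwa [mem_ker, sub_apply, Module.End.one_apply, sub_eq_zero] at this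

end Projection

section MeanErgodic

variable {𝕜 V : Type*} [RCLike 𝕜] [NormedAddCommGroup V] [NormedSpace 𝕜 V] {T : V →ₗ[𝕜] V}

theorem isBounded_range_pow_apply_of_mem_span {s : Set V}
    (hs : ∀ x ∈ s, IsBounded (Set.range fun k : ℕ => (T ^ k) x)) {x : V}
    (hx : x ∈ Submodule.span 𝕜 s) : IsBounded (Set.range fun k : ℕ => (T ^ k) x) := by
  induction hx using Submodule.span_induction with
  | mem x hx => exact hs x hx
  | zero => simp
  | add x y _ _ hx hy =>
    refine (hx.add hy).subset ?_
    rintro _ ⟨k, rfl⟩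
    simp only [map_add]
    exact Set.add_mem_add ⟨k, rfl⟩ ⟨k, rfl⟩
  | smul c x _ hx =>
    refine (hx.smul₀ c).subset ?_
    rintro _ ⟨k, rfl⟩
    simp only [map_smul]
    exact Set.smul_mem_smul_set ⟨k, rfl⟩

theorem birkhoffAverage_apply_sub (N : ℕ) (x y : V) :
    birkhoffAverage 𝕜 T _root_.id N (x - y) =
      birkhoffAverage 𝕜 T _root_.id N x - birkhoffAverage 𝕜 T _root_.id N y := by
  simp only [birkhoffAverage, birkhoffSum, _root_.id, ← Module.End.pow_apply, map_sub,
    Finset.sum_sub_distrib, smul_sub]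

theorem tendsto_birkhoffAverage_apply_sub_self
    (hT : ∀ x, IsBounded (Set.range fun k : ℕ => (T ^ k) x)) (z : V) :
    Tendsto (birkhoffAverage 𝕜 T _root_.id · (T z - z)) atTop (𝓝 0) := by
  have hz : IsBounded (Set.range ((⇑T)^[·] z)) := by
    simpa only [Module.End.pow_apply] using hT z
  simpa only [birkhoffAverage_apply_sub]
    using tendsto_birkhoffAverage_apply_sub_birkhoffAverage 𝕜 hz

theorem disjoint_ker_range_sub_one
    (hT : ∀ x, IsBounded (Set.range fun k : ℕ => (T ^ k) x)) :
    Disjoint (ker (T - 1)) (range (T - 1)) := by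
  rw [Submodule.disjoint_def]
  rintro _ hy ⟨z, rfl⟩
  have hfix : IsFixedPt T ((T - 1) z) := by
    rwa [mem_ker, sub_apply, Module.End.one_apply, sub_eq_zero] at hy
  exact tendsto_nhds_unique (hfix.tendsto_birkhoffAverage 𝕜 _root_.id)
    (tendsto_birkhoffAverage_apply_sub_self hT z)

theorem isCompl_ker_range_sub_one [FiniteDimensional 𝕜 V]
    (hT : ∀ x, IsBounded (Set.range fun k : ℕ => (T ^ k) x)) :
    IsCompl (ker (T - 1)) (range (T - 1)) :=
  (Submodule.isCompl_iff_disjoint _ _ (by rw [add_comm, finrank_range_add_finrank_ker])).2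
    (disjoint_ker_range_sub_one hT)

theorem tendsto_birkhoffAverage_projection_ker_sub_one
    (hT : ∀ x, IsBounded (Set.range fun k : ℕ => (T ^ k) x))
    (h : IsCompl (ker (T - 1)) (range (T - 1))) (x : V) :
    Tendsto (birkhoffAverage 𝕜 T _root_.id · x) atTop
      (𝓝 ((ker (T - 1)).projection (range (T - 1)) h x)) := by
  set P := (ker (T - 1)).projection (range (T - 1)) h
  obtain ⟨z, hz⟩ : x - P x ∈ range (T - 1) := by
    rw [← Submodule.projection_eq_self_sub_projection]
    exact Submodule.projection_apply_mem _ _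
  rw [sub_apply, Module.End.one_apply] at hz
  have hfix : IsFixedPt T (P x) := LinearMap.congr_fun (comp_projection_ker_sub_one h) x
  have := (hfix.tendsto_birkhoffAverage 𝕜 _root_.id).add
    (tendsto_birkhoffAverage_apply_sub_self hT z)
  rw [add_zero] at this
  refine this.congr fun N => ?_
  rw [hz, birkhoffAverage_apply_sub, add_sub_cancel]

end MeanErgodic

end LinearMap

theorem IsCompletelyPositive.posSemidef_apply {ι : Type*} {Φ : Matrix ι ι ℂ →ₗ[ℂ] Matrix ι ι ℂ}
    (hΦ : IsCompletelyPositive Φ) {x : Matrix ι ι ℂ} (hx : x.PosSemidef) : (Φ x).PosSemidef := by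
  let e := Equiv.uniqueProd ι (Fin 1)
  exact (posSemidef_submatrix_equiv e).1 (hΦ 1 _ (hx.submatrix e))

namespace Matrix

variable {ι : Type*}

theorem posSemidef_pow_apply {Φ : Module.End ℂ (Matrix ι ι ℂ)}
    (hpos : ∀ x : Matrix ι ι ℂ, x.PosSemidef → (Φ x).PosSemidef) (k : ℕ) {x : Matrix ι ι ℂ}
    (hx : x.PosSemidef) : ((Φ ^ k) x).PosSemidef := by
  rw [Module.End.pow_apply]
  exact Set.MapsTo.iterate (s := {x : Matrix ι ι ℂ | x.PosSemidef}) hpos k hx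

variable [Fintype ι]

theorem isClosed_setOf_posSemidef {R : Type*} [CommRing R] [PartialOrder R] [StarRing R]
    [TopologicalSpace R] [IsTopologicalRing R] [ContinuousStar R] [OrderClosedTopology R] :
    IsClosed {A : Matrix ι ι R | A.PosSemidef} := by
  simp only [posSemidef_iff_dotProduct_mulVec, Set.ofPred_and, Set.ofPred_forall]
  exact (isClosed_eq continuous_id.matrix_conjTranspose continuous_id).inter
    (isClosed_iInter fun v => isClosed_le continuous_const
      (continuous_const.dotProduct (continuous_id.matrix_mulVec continuous_const)))

open scoped MatrixOrder in
theorem span_setOf_posSemidef [DecidableEq ι] :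
    Submodule.span ℂ {A : Matrix ι ι ℂ | A.PosSemidef} = ⊤ := by
  simpa only [nonneg_iff_posSemidef] using CStarAlgebra.span_nonneg (A := Matrix ι ι ℂ)

theorem PosSemidef.norm_apply_le_trace_re {A : Matrix ι ι ℂ} (hA : A.PosSemidef) (i j : ι) :
    ‖A i j‖ ≤ A.trace.re := by
  have hdiag : ∀ k, 0 ≤ (A k k).re ∧ (A k k).im = 0 := fun k => by
    simpa [Complex.le_def, eq_comm] using hA.diag_nonneg (i := k)
  have hle : ∀ k, (A k k).re ≤ A.trace.re := fun k => by
    rw [trace, re_sum]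
    exact Finset.single_le_sum (fun l _ => (hdiag l).1) (Finset.mem_univ k)
  have hminor : ‖A i j‖ ^ 2 ≤ (A i i).re * (A j j).re := by
    classical
    have hdet := (Complex.le_def.1 (hA.submatrix ![i, j]).det_nonneg).1
    rw [det_fin_two] at hdet
    rw [← hA.1.apply i j, norm_star, Complex.sq_norm, normSq_apply]
    simpa [← hA.1.apply i j, (hdiag i).2, (hdiag j).2] using hdet
  nlinarith [hle i, hle j, (hdiag i).1, (hdiag j).1, norm_nonneg (A i j)]

section SupNorm

attribute [local instance] Matrix.normedAddCommGroup Matrix.normedSpace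

theorem PosSemidef.norm_le_trace_re {A : Matrix ι ι ℂ} (hA : A.PosSemidef) : ‖A‖ ≤ A.trace.re :=
  (norm_le_iff (Complex.le_def.1 hA.trace_nonneg).1).2 hA.norm_apply_le_trace_re

theorem isBounded_range_pow_apply_of_posSemidef [DecidableEq ι] {Φ : Module.End ℂ (Matrix ι ι ℂ)}
    (hpos : ∀ x : Matrix ι ι ℂ, x.PosSemidef → (Φ x).PosSemidef)
    (htr : ∀ x, (Φ x).trace = x.trace) (x : Matrix ι ι ℂ) :
    IsBounded (Set.range fun k : ℕ => (Φ ^ k) x) := by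
  refine LinearMap.isBounded_range_pow_apply_of_mem_span (s := {x | x.PosSemidef})
    (fun y hy => ?_) (span_setOf_posSemidef (ι := ι) ▸ Submodule.mem_top)
  refine (Metric.isBounded_closedBall (x := 0) (r := y.trace.re)).subset ?_
  rintro _ ⟨k, rfl⟩
  have htrk : ((Φ ^ k) y).trace = y.trace := by
    rw [Module.End.pow_apply]
    exact congr_fun (iterate_invariant (g := trace) (funext htr) k) y
  rw [mem_closedBall_zero_iff, ← htrk]
  exact (posSemidef_pow_apply hpos k hy).norm_le_trace_re

end SupNorm

end Matrix

theorem stmt8_general (Φ : Module.End ℂ (Matrix n n ℂ))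
    (hcp : IsCompletelyPositive Φ)
    (htr : ∀ x, (Φ x).trace = x.trace) :
    ∃ E : Module.End ℂ (Matrix n n ℂ),
      (∀ x, Tendsto (fun N : ℕ => (N : ℂ)⁻¹ • ∑ k ∈ Finset.Icc 1 N, (Φ ^ k) x)
        atTop (nhds (E x))) ∧
      E ∘ₗ Φ = E ∧ Φ ∘ₗ E = E ∧ E ∘ₗ E = E ∧
      (∀ x, x.PosSemidef → (E x).PosSemidef) ∧
      Set.range E = {x | Φ x = x} := by
  let _ := Matrix.normedAddCommGroup (m := n) (n := n) (α := ℂ)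
  let _ : NormedSpace ℂ (Matrix n n ℂ) := Matrix.normedSpace
  have hpos : ∀ x : Matrix n n ℂ, x.PosSemidef → (Φ x).PosSemidef := fun _ => hcp.posSemidef_apply
  have hbdd := isBounded_range_pow_apply_of_posSemidef hpos htr
  have hcompl := LinearMap.isCompl_ker_range_sub_one hbdd
  set E := (LinearMap.ker (Φ - 1)).projection (LinearMap.range (Φ - 1)) hcompl
  have hconv : ∀ x, Tendsto (fun N : ℕ => (N : ℂ)⁻¹ • ∑ k ∈ Finset.Icc 1 N, (Φ ^ k) x)
      atTop (nhds (E x)) := fun x => by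
    have := LinearMap.tendsto_birkhoffAverage_projection_ker_sub_one hbdd hcompl (Φ x)
    rw [← LinearMap.comp_apply, LinearMap.projection_ker_sub_one_comp_self] at this
    refine this.congr fun N => ?_
    rw [birkhoffAverage, ← Module.End.sum_Icc_pow_apply_eq_birkhoffSum]
  have hmeans_pos : ∀ x : Matrix n n ℂ, x.PosSemidef → ∀ N : ℕ,
      ((N : ℂ)⁻¹ • ∑ k ∈ Finset.Icc 1 N, (Φ ^ k) x).PosSemidef := fun x hx N =>
    (posSemidef_sum _ fun k _ => posSemidef_pow_apply hpos k hx).smul (by positivity)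
  refine ⟨E, hconv, LinearMap.projection_ker_sub_one_comp_self hcompl,
    LinearMap.comp_projection_ker_sub_one hcompl, Submodule.isIdempotentElem_projection hcompl,
    fun x hx => isClosed_setOf_posSemidef.mem_of_tendsto (hconv x) (.of_forall (hmeans_pos x hx)),
    ?_⟩
  rw [← LinearMap.coe_range, Submodule.range_projection]
  ext x
  simp [sub_eq_zero]

/-- For a unital completely positive trace-preserving map `Φ`, the Cesàro averages
`(1/N) ∑_{k=1}^N Φ^k` converge to a positive idempotent `E` projecting onto the
fixed-point space of `Φ`, with `E∘Φ = Φ∘E = E`. -/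
theorem stmt8 (Φ : Module.End ℂ (Matrix n n ℂ))
    (hΦ1 : Φ 1 = 1) (hcp : IsCompletelyPositive Φ)
    (htr : ∀ x, (Φ x).trace = x.trace) :
    ∃ E : Module.End ℂ (Matrix n n ℂ),
      (∀ x, Tendsto (fun N : ℕ => (N : ℂ)⁻¹ • ∑ k ∈ Finset.Icc 1 N, (Φ ^ k) x)
        atTop (nhds (E x))) ∧
      E ∘ₗ Φ = E ∧ Φ ∘ₗ E = E ∧ E ∘ₗ E = E ∧
      (∀ x, x.PosSemidef → (E x).PosSemidef) ∧
      Set.range E = {x | Φ x = x} :=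
  stmt8_general Φ hcp htr
end

section
/- Let Φ be a unital positive map on Matrix n n ℂ with a faithful invariant state, and suppose the fixed-point space M(Φ,1) is a *-subalgebra which is a factor (trivial center). If u ∈ M(Φ,α) is a nonzero element with polar decomposition u = v|u| and |u| ∈ M(Φ,1), then the partial isometry v also lies in M(Φ,α). -/
open Matrix Complex ComplexOrder

variable {n : Type*} [Fintype n] [DecidableEq n]

/-!
A unital completely positive map satisfies the Kadison–Schwarz inequality
`Φ (zᴴ * z) ≥ (Φ z)ᴴ * Φ z`, and expanding it at `y + t • x` (Choi) shows that equality at `y`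
forces `Φ (x * y) = Φ x * Φ y` for every `x`. As fixed points multiply to fixed points, equality
holds at every fixed point: at `a = |u|` and at `a * q`, where the pseudo-inverse `q` of `a` is a
polynomial in `a`. So `Φ v * a = Φ (v * a) = α • (v * a)`; and `v * (a * q) = v` because `v`
vanishes on `ker a`, whence `Φ v = Φ (v * (a * q)) = Φ v * a * q = α • v`.
-/

open ComplexConjugate Polynomial

theorem IsSelfAdjoint.exists_polynomial_mul_self_mul_aeval_eq {A : Type*} [Ring A] [StarRing A]
    [TopologicalSpace A] [Algebra ℝ A] [ContinuousFunctionalCalculus ℝ A IsSelfAdjoint] {a : A}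
    (ha : IsSelfAdjoint a) (hfin : (spectrum ℝ a).Finite) :
    ∃ P : ℝ[X], a * a * aeval a P = a := by
  classical
  set P := Lagrange.interpolate hfin.toFinset id (·⁻¹)
  refine ⟨P, ?_⟩
  calc a * a * aeval a P = cfc (fun t => t * t * P.eval t) a := by
        rw [cfc_mul .., cfc_mul .., cfc_id' ℝ a, cfc_polynomial P a]
    _ = cfc id a := cfc_congr fun t ht => by
        have hP := Lagrange.eval_interpolate_at_node (·⁻¹) (Set.injOn_id _)
          (hfin.mem_toFinset.2 ht)
        simp only [id] at hP ⊢
        rw [hP, mul_self_mul_inv]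
    _ = a := cfc_id ℝ a

theorem LinearMap.map_aeval_eq_self {R A : Type*} [CommSemiring R] [Semiring A] [Algebra R A]
    (Φ : A →ₗ[R] A) (h1 : Φ 1 = 1) (hmul : ∀ x y, Φ x = x → Φ y = y → Φ (x * y) = x * y)
    {a : A} (ha : Φ a = a) (P : R[X]) : Φ (aeval a P) = aeval a P := by
  let S : Subalgebra R A :=
    { carrier := {x | Φ x = x}
      mul_mem' := hmul _ _
      add_mem' := fun hx hy => by simp_all
      algebraMap_mem' := fun r => by simp [Algebra.algebraMap_eq_smul_one, h1] }
  exact Algebra.adjoin_le (S := S) (Set.singleton_subset_iff.2 ha)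
    (aeval_mem_adjoin_singleton R a)

theorem Complex.eq_zero_of_forall_nonneg_two_mul_re_add {c : ℂ} {k : ℝ}
    (h : ∀ t : ℂ, 0 ≤ 2 * (t * c).re + normSq t * k) : c = 0 := by
  set s : ℝ := (|k| + 1)⁻¹
  have hs : 0 < s := by positivity
  have hsk : s * k < 1 := by
    rw [inv_mul_lt_one₀ (by positivity)]
    linarith [le_abs_self k]
  have key := h (-(s * conj c))
  rw [show -(s * conj c) * c = ((-(s * normSq c) : ℝ) : ℂ) by
    push_cast; rw [normSq_eq_conj_mul_self]; ring] at key
  simp only [ofReal_re, normSq_neg, normSq_mul, normSq_ofReal, normSq_conj] at key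
  have hm : s * normSq c ≤ 0 := by nlinarith [normSq_nonneg c]
  exact normSq_eq_zero.1 (le_antisymm (nonpos_of_mul_nonpos_right hm hs) (normSq_nonneg c))

theorem Matrix.eq_zero_of_forall_star_dotProduct_mulVec_eq_zero {B : Matrix n n ℂ}
    (h : ∀ ξ : n → ℂ, star ξ ⬝ᵥ (B *ᵥ ξ) = 0) : B = 0 := by
  refine toEuclideanLin.map_eq_zero_iff.mp ((inner_map_self_eq_zero _).1 fun x => ?_)
  rw [← inner_conj_symm, EuclideanSpace.inner_eq_star_dotProduct, ofLp_toLpLin, toLin'_apply,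
    dotProduct_comm, h, map_zero]

theorem Matrix.eq_zero_of_forall_posSemidef_smul_add {B K : Matrix n n ℂ}
    (h : ∀ t : ℂ, (t • B + star t • Bᴴ + (star t * t) • K).PosSemidef) : B = 0 := by
  refine eq_zero_of_forall_star_dotProduct_mulVec_eq_zero fun ξ => ?_
  refine Complex.eq_zero_of_forall_nonneg_two_mul_re_add (k := (star ξ ⬝ᵥ (K *ᵥ ξ)).re) fun t => ?_
  have hBH : star ξ ⬝ᵥ (Bᴴ *ᵥ ξ) = conj (star ξ ⬝ᵥ (B *ᵥ ξ)) := by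
    rw [star_dotProduct, star_mulVec, conjTranspose_conjTranspose, ← dotProduct_mulVec]; rfl
  have := (Complex.le_def.1 ((h t).dotProduct_mulVec_nonneg ξ)).1
  simp only [add_mulVec, smul_mulVec, dotProduct_add, dotProduct_smul, smul_eq_mul, hBH] at this
  simp only [zero_re, add_re, mul_re, mul_im, conj_re, conj_im, star_def, normSq_apply] at this ⊢
  linarith

namespace IsCompletelyPositive

theorem posSemidef_gram {n : Type*} [Fintype n] {Φ : Matrix n n ℂ →ₗ[ℂ] Matrix n n ℂ}
    (hcp : IsCompletelyPositive Φ) {m : ℕ} [NeZero m] (M : Fin m → Matrix n n ℂ) :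
    (Matrix.of fun p q : Fin m × n => Φ ((M p.1)ᴴ * M q.1) p.2 q.2).PosSemidef := by
  let B : Matrix (Fin m × n) (Fin m × n) ℂ := .of fun p q => if p.1 = 0 then M q.1 p.2 q.2 else 0
  convert hcp m (Bᴴ * B) (posSemidef_conjTranspose_mul_self B) using 1
  ext p q
  simp [blockApply, B, Matrix.mul_apply, Fintype.sum_prod_type]
  rfl

variable {Φ : Matrix n n ℂ →ₗ[ℂ] Matrix n n ℂ}

theorem map_conjTranspose (hcp : IsCompletelyPositive Φ) (z : Matrix n n ℂ) :
    Φ zᴴ = (Φ z)ᴴ := by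
  ext i j
  simpa using (congr_fun₂ (hcp.posSemidef_gram ![1, z]).isHermitian ((1 : Fin 2), i) (0, j)).symm

theorem posSemidef_map_conjTranspose_mul_self_sub (hcp : IsCompletelyPositive Φ)
    (hΦ1 : Φ 1 = 1) (z : Matrix n n ℂ) :
    (Φ (zᴴ * z) - (Φ z)ᴴ * Φ z).PosSemidef := by
  let e : n ⊕ n ≃ Fin 2 × n := ((finTwoEquiv.prodCongr (.refl n)).trans (.boolProdEquivSum n)).symm
  have hblock : (fromBlocks 1 (Φ z) (Φ z)ᴴ (Φ (zᴴ * z))).PosSemidef := by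
    convert (posSemidef_submatrix_equiv e).2 (hcp.posSemidef_gram ![1, z]) using 1
    ext (i | i) (j | j) <;> simp [e, finTwoEquiv, hΦ1, ← hcp.map_conjTranspose z]
  have : Invertible (1 : Matrix n n ℂ) := invertibleOne
  simpa using (PosDef.one.fromBlocks₁₁ (Φ z) (Φ (zᴴ * z))).1 hblock

theorem map_conjTranspose_mul_of_map_conjTranspose_mul_self (hcp : IsCompletelyPositive Φ)
    (hΦ1 : Φ 1 = 1) {y : Matrix n n ℂ} (hy : Φ (yᴴ * y) = (Φ y)ᴴ * Φ y) (x : Matrix n n ℂ) :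
    Φ (yᴴ * x) = (Φ y)ᴴ * Φ x := by
  rw [← sub_eq_zero]
  refine eq_zero_of_forall_posSemidef_smul_add (K := Φ (xᴴ * x) - (Φ x)ᴴ * Φ x) fun t => ?_
  -- Kadison–Schwarz at `y + t • x`; its `yᴴ * y` part vanishes by `hy`.
  convert hcp.posSemidef_map_conjTranspose_mul_self_sub hΦ1 (y + t • x) using 1
  simp only [conjTranspose_sub, conjTranspose_mul, conjTranspose_conjTranspose,
    ← hcp.map_conjTranspose, conjTranspose_add, conjTranspose_smul, add_mul, mul_add, map_add,
    map_smul, Matrix.smul_mul, Matrix.mul_smul, hy]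
  module

theorem map_mul_of_map_conjTranspose_mul_self (hcp : IsCompletelyPositive Φ) (hΦ1 : Φ 1 = 1)
    {y : Matrix n n ℂ} (hy : Φ (yᴴ * y) = (Φ y)ᴴ * Φ y) (x : Matrix n n ℂ) :
    Φ (x * y) = Φ x * Φ y := by
  calc Φ (x * y) = (Φ (yᴴ * xᴴ))ᴴ := by
        rw [← hcp.map_conjTranspose, conjTranspose_mul, conjTranspose_conjTranspose,
          conjTranspose_conjTranspose]
    _ = Φ x * Φ y := by
        rw [hcp.map_conjTranspose_mul_of_map_conjTranspose_mul_self hΦ1 hy, conjTranspose_mul,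
          conjTranspose_conjTranspose, ← hcp.map_conjTranspose, conjTranspose_conjTranspose]

theorem map_mul_of_map_eq_self (hcp : IsCompletelyPositive Φ) (hΦ1 : Φ 1 = 1)
    (hmul : ∀ x y, Φ x = x → Φ y = y → Φ (x * y) = x * y) {y : Matrix n n ℂ} (hy : Φ y = y)
    (x : Matrix n n ℂ) : Φ (x * y) = Φ x * y := by
  have hyH : Φ yᴴ = yᴴ := by rw [hcp.map_conjTranspose, hy]
  rw [hcp.map_mul_of_map_conjTranspose_mul_self hΦ1 (by rw [hmul _ _ hyH hy, hy]), hy]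

end IsCompletelyPositive

theorem stmt9_general (Φ : Matrix n n ℂ →ₗ[ℂ] Matrix n n ℂ)
    (hΦ1 : Φ 1 = 1) (hcp : IsCompletelyPositive Φ)
    -- M(Φ,ᾱ)·M(Φ,α) ⊆ M(Φ,1) :
    (hmulsub : ∀ (β : ℂ), ‖β‖ = 1 → ∀ a b : Matrix n n ℂ,
      Φ a = (starRingEnd ℂ β) • a → Φ b = β • b → Φ (a * b) = a * b)
    (α : ℂ)
    (u : Matrix n n ℂ) (hu : Φ u = α • u)
    (a : Matrix n n ℂ) (ha : a.PosSemidef) (hafix : Φ a = a)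
    (v : Matrix n n ℂ) (hva : v * a = u) (hvker : ∀ b : Matrix n n ℂ, a * b = 0 → v * b = 0) :
    Φ v = α • v := by
  have hmul : ∀ x y, Φ x = x → Φ y = y → Φ (x * y) = x * y := fun x y hx hy =>
    hmulsub 1 (by simp) x y (by simpa using hx) (by simpa using hy)
  obtain ⟨P, haaq⟩ :=
    ha.isHermitian.isSelfAdjoint.exists_polynomial_mul_self_mul_aeval_eq a.finite_real_spectrum
  set q := aeval a P
  have hq : Φ q = q := (Φ.restrictScalars ℝ).map_aeval_eq_self hΦ1 hmul hafix P
  have hvp : v * (a * q) = v := by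
    have := hvker (1 - a * q) (by rw [mul_sub, mul_one, ← mul_assoc, haaq, sub_self])
    rwa [mul_sub, mul_one, sub_eq_zero, eq_comm] at this
  have hΦva : Φ v * a = α • (v * a) := by
    rw [← hcp.map_mul_of_map_eq_self hΦ1 hmul hafix, hva, hu]
  calc Φ v = Φ (v * (a * q)) := by rw [hvp]
    _ = Φ v * a * q := by rw [hcp.map_mul_of_map_eq_self hΦ1 hmul (hmul _ _ hafix hq), mul_assoc]
    _ = α • v := by rw [hΦva, smul_mul_assoc, mul_assoc, hvp]

/-- If `u ∈ M(Φ,α)` has polar decomposition `u = v·|u|` with `|u| ∈ M(Φ,1)`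
(and `v` the canonical partial isometry vanishing on the kernel of `|u|`),
then `v ∈ M(Φ,α)`. -/
theorem stmt9 (Φ : Matrix n n ℂ →ₗ[ℂ] Matrix n n ℂ)
    (hΦ1 : Φ 1 = 1) (hcp : IsCompletelyPositive Φ)
    (ω : Matrix n n ℂ →ₗ[ℂ] ℂ)
    (hωpos : ∀ y, y.PosSemidef → 0 ≤ ω y)
    (hωfaith : ∀ y, y.PosSemidef → ω y = 0 → y = 0)
    (hωinv : ∀ y, ω (Φ y) = ω y)
    -- M(Φ,ᾱ)·M(Φ,α) ⊆ M(Φ,1) :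
    (hmulsub : ∀ (β : ℂ), ‖β‖ = 1 → ∀ a b : Matrix n n ℂ,
      Φ a = (starRingEnd ℂ β) • a → Φ b = β • b → Φ (a * b) = a * b)
    -- M(Φ,1) is a factor (trivial center):
    (hfactor : ∀ z : Matrix n n ℂ, Φ z = z → (∀ w, Φ w = w → z * w = w * z) →
      ∃ c : ℂ, z = c • 1)
    (α : ℂ) (hα : ‖α‖ = 1)
    (u : Matrix n n ℂ) (hu0 : u ≠ 0) (hu : Φ u = α • u)
    (a : Matrix n n ℂ) (ha : a.PosSemidef) (ha2 : a * a = uᴴ * u) (hafix : Φ a = a)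
    (v : Matrix n n ℂ) (hva : v * a = u) (hvker : ∀ b : Matrix n n ℂ, a * b = 0 → v * b = 0) :
    Φ v = α • v :=
  stmt9_general Φ hΦ1 hcp hmulsub α u hu a ha hafix v hva hvker
end

section
/- Suppose Φ is a positive linear map on a finite-dimensional C*-algebra with spectral radius 1, and suppose E is a conditional expectation with E∘Φ = E and E(y) ≥ λ·y for all y ≥ 0 with λ > 0 (Pimsner–Popa inequality). If x ≥ 0 is nonzero with Φ(x) ≤ x, then Φ(x) = x. Consequently, if Φ(x) = r̃·x for some x ≥ 0 nonzero with r̃ real, then r̃ = 1. -/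
open Matrix Complex ComplexOrder

variable {n : Type*} [Fintype n] [DecidableEq n]

/-! Since `E ∘ Φ = E`, the positive matrix `x - Φ x` lies in the kernel of `E`, and the
Pimsner–Popa inequality `λ y ≤ E y` makes `E` faithful on positive matrices. -/

open scoped MatrixOrder in
theorem Matrix.PosSemidef.eq_zero_of_pimsnerPopa {m : Type*} {E : Matrix m m ℂ → Matrix m m ℂ}
    {lam : ℝ} (hlam : 0 < lam)
    (hPP : ∀ y : Matrix m m ℂ, y.PosSemidef → (E y - (lam : ℂ) • y).PosSemidef)
    {y : Matrix m m ℂ} (hy : y.PosSemidef) (hEy : E y = 0) : y = 0 := by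
  have hneg : (-((lam : ℂ) • y)).PosSemidef := by simpa [hEy] using hPP y hy
  have hy_nonpos : y ≤ 0 := by
    rw [le_iff, zero_sub]
    simpa [smul_smul, hlam.ne'] using hneg.smul (inv_nonneg.mpr hlam.le)
  exact le_antisymm hy_nonpos hy.nonneg

theorem stmt14_general (Φ E : Module.End ℂ (Matrix n n ℂ))
    (hEΦ : E ∘ₗ Φ = E)
    (lam : ℝ) (hlam : 0 < lam)
    (hPP : ∀ y : Matrix n n ℂ, y.PosSemidef → (E y - (lam : ℂ) • y).PosSemidef) :
    (∀ x : Matrix n n ℂ, x.PosSemidef → x ≠ 0 → (x - Φ x).PosSemidef → Φ x = x) ∧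
    (∀ (x : Matrix n n ℂ) (r : ℝ), x.PosSemidef → x ≠ 0 → Φ x = (r : ℂ) • x → r = 1) := by
  have hEΦx (x : Matrix n n ℂ) : E (Φ x) = E x := LinearMap.congr_fun hEΦ x
  have faithful {y : Matrix n n ℂ} (hy : y.PosSemidef) (hEy : E y = 0) : y = 0 :=
    hy.eq_zero_of_pimsnerPopa hlam hPP hEy
  refine ⟨fun x _ _ hsub => ?_, fun x r hx hx0 heig => ?_⟩
  · have hE : E (x - Φ x) = 0 := by rw [map_sub, hEΦx, sub_self]
    exact (sub_eq_zero.mp (faithful hsub hE)).symm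
  · have hEx : E x ≠ 0 := fun h => hx0 (faithful hx h)
    have hscale : (r : ℂ) • E x = (1 : ℂ) • E x := by
      rw [one_smul, ← map_smul, ← heig, hEΦx]
    exact_mod_cast smul_left_injective ℂ hEx hscale

/-- Collatz–Wielandt-type rigidity via a Pimsner–Popa conditional expectation: if `Φ` is a
positive map of spectral radius `1`, `E` a positive idempotent with `E∘Φ = E` and
`E(y) ≥ λ y` for all PSD `y` (λ > 0), then `Φ(x) ≤ x` for nonzero PSD `x` forces
`Φ(x) = x`; and any PSD eigenvector has eigenvalue `1`. -/
theorem stmt14 (Φ E : Module.End ℂ (Matrix n n ℂ))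
    (hΦpos : ∀ x : Matrix n n ℂ, x.PosSemidef → (Φ x).PosSemidef)
    (hrad : IsGreatest {t : ℝ | ∃ μ ∈ spectrum ℂ Φ, t = ‖μ‖} 1)
    (hEpos : ∀ x : Matrix n n ℂ, x.PosSemidef → (E x).PosSemidef)
    (hEE : E ∘ₗ E = E) (hEΦ : E ∘ₗ Φ = E)
    (lam : ℝ) (hlam : 0 < lam)
    (hPP : ∀ y : Matrix n n ℂ, y.PosSemidef → (E y - (lam : ℂ) • y).PosSemidef) :
    (∀ x : Matrix n n ℂ, x.PosSemidef → x ≠ 0 → (x - Φ x).PosSemidef → Φ x = x) ∧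
    (∀ (x : Matrix n n ℂ) (r : ℝ), x.PosSemidef → x ≠ 0 → Φ x = (r : ℂ) • x → r = 1) :=
  stmt14_general Φ E hEΦ lam hlam hPP
end

section
/- Let M be a finite von Neumann algebra with trace τ (take M = Matrix n n ℂ with normalized trace) and N ⊆ M a unital *-subalgebra with trace-preserving conditional expectation E. If E(x) ≥ λ·x for all x ≥ 0 with λ > 0, and p is a projection in M with E(p) ≤ c·p for some c > 0, then p ∈ N. -/
/-!
Put `x = E(p) ∈ S`. The Pimsner–Popa bound and the hypothesis give `λ p ≤ x ≤ c p`. The kernel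
of a positive matrix can only shrink as the matrix grows, so `x ≤ c p` gives `x (1 - p) = 0` and
`λ p ≤ x` gives `ker x ⊆ ker p`; hence `p` is the range projection of `x`. That projection is
`f(x)` for `f t = t t⁻¹`, so it lies in the *-subalgebra `S`, which is closed because it is
finite-dimensional.
-/

open Matrix Complex ComplexOrder

variable {n : Type*} [Fintype n] [DecidableEq n]

open scoped MatrixOrder

namespace Matrix

variable {𝕜 : Type*} [RCLike 𝕜]

theorem PosSemidef.mul_eq_zero_of_conjTranspose_mul_mul_eq_zero {m : Type*} [Fintype m]
    {A : Matrix n n 𝕜} {B : Matrix n m 𝕜} (hA : A.PosSemidef) (h : Bᴴ * A * B = 0) :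
    A * B = 0 := by
  have hs : IsSelfAdjoint (CFC.sqrt A) := .of_nonneg (CFC.sqrt_nonneg A)
  have hA' : 0 ≤ A := nonneg_iff_posSemidef.mpr hA
  have hsB : CFC.sqrt A * B = 0 := by
    rw [← conjTranspose_mul_self_eq_zero, conjTranspose_mul, ← star_eq_conjTranspose,
      hs.star_eq, ← Matrix.mul_assoc, Matrix.mul_assoc Bᴴ, CFC.sqrt_mul_sqrt_self A, h]
  rw [← CFC.sqrt_mul_sqrt_self A, Matrix.mul_assoc, hsB, Matrix.mul_zero]

theorem mul_eq_zero_of_le_of_mul_eq_zero {A B e : Matrix n n 𝕜} (hA : 0 ≤ A) (hAB : A ≤ B)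
    (hBe : B * e = 0) : A * e = 0 := by
  have hle : star e * A * e ≤ 0 := by
    simpa only [Matrix.mul_assoc, hBe, Matrix.mul_zero] using star_left_conjugate_le_conjugate hAB e
  exact hA.posSemidef.mul_eq_zero_of_conjTranspose_mul_mul_eq_zero
    (le_antisymm hle (star_left_conjugate_nonneg hA e))

/-- The range projection of a Hermitian matrix: `t * t⁻¹` is the indicator of `t ≠ 0`,
since `0⁻¹ = 0`. -/
noncomputable def rangeProj (x : Matrix n n 𝕜) : Matrix n n 𝕜 := cfc (fun t : ℝ => t * t⁻¹) x

theorem mul_cfc_eq_cfc_mul {x : Matrix n n 𝕜} (hx : x.IsHermitian) (f : ℝ → ℝ) :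
    x * cfc f x = cfc (fun t => t * f t) x := by
  have hx' : IsSelfAdjoint x := hx
  have hcont (g : ℝ → ℝ) : ContinuousOn g (spectrum ℝ x) := x.finite_real_spectrum.continuousOn g
  rw [cfc_mul _ _ x (hcont _) (hcont _), cfc_id' ℝ x]

theorem mul_rangeProj {x : Matrix n n 𝕜} (hx : x.IsHermitian) : x * rangeProj x = x := by
  have hx' : IsSelfAdjoint x := hx
  rw [rangeProj, mul_cfc_eq_cfc_mul hx]
  conv_rhs => rw [← cfc_id' ℝ x]
  simp_rw [← mul_assoc, mul_self_mul_inv]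

theorem rangeProj_mem {S : StarSubalgebra 𝕜 (Matrix n n 𝕜)} {x : Matrix n n 𝕜} (hx : x ∈ S) :
    rangeProj x ∈ S :=
  cfc_mem (s := S) (hs := S.toSubmodule.closed_of_finiteDimensional) _ hx

theorem eq_rangeProj {x p : Matrix n n 𝕜} (hx : x.IsHermitian) (hp : p.IsHermitian)
    (hpp : p * p = p) (hxp : x * p = x) (hker : ∀ e, x * e = 0 → p * e = 0) :
    p = rangeProj x := by
  have hpx : p * x = x := by
    simpa only [conjTranspose_mul, hx.eq, hp.eq] using congrArg conjTranspose hxp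
  have hpy : p * rangeProj x = rangeProj x := by
    rw [rangeProj, ← mul_cfc_eq_cfc_mul hx, ← Matrix.mul_assoc, hpx]
  have hpe : p * (p - rangeProj x) = 0 :=
    hker _ (by rw [Matrix.mul_sub, hxp, mul_rangeProj hx, sub_self])
  rwa [Matrix.mul_sub, hpp, hpy, sub_eq_zero] at hpe

end Matrix

theorem stmt17_general (S : StarSubalgebra ℂ (Matrix n n ℂ)) (E : Module.End ℂ (Matrix n n ℂ))
    (hrange : ∀ x, E x ∈ S)
    (lam : ℝ) (hlam : 0 < lam)
    (hPP : ∀ y : Matrix n n ℂ, y.PosSemidef → (E y - (lam : ℂ) • y).PosSemidef)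
    (p : Matrix n n ℂ) (hp : p.IsHermitian) (hpp : p * p = p)
    (c : ℝ) (hle : ((c : ℂ) • p - E p).PosSemidef) :
    p ∈ S := by
  have hp0 : p.PosSemidef := by
    simpa only [hp.eq, hpp] using posSemidef_conjTranspose_mul_self p
  have hlamp : 0 ≤ (lam : ℂ) • p :=
    nonneg_iff_posSemidef.mpr (hp0.smul (by exact_mod_cast hlam.le))
  have hlow : (lam : ℂ) • p ≤ E p := le_iff.mpr (hPP p hp0)
  have hEp : 0 ≤ E p := hlamp.trans hlow
  have hsupp : E p * p = E p := by
    have h := mul_eq_zero_of_le_of_mul_eq_zero hEp (le_iff.mpr hle) (e := 1 - p)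
      (by rw [smul_mul_assoc, Matrix.mul_sub, hpp, Matrix.mul_one, sub_self, smul_zero])
    rwa [Matrix.mul_sub, Matrix.mul_one, sub_eq_zero, eq_comm] at h
  have hker : ∀ e, E p * e = 0 → p * e = 0 := fun e he => by
    have h := mul_eq_zero_of_le_of_mul_eq_zero hlamp hlow he
    rwa [smul_mul_assoc, smul_eq_zero, or_iff_right (by exact_mod_cast hlam.ne')] at h
  rw [eq_rangeProj hEp.posSemidef.isHermitian hp hpp hsupp hker]
  exact rangeProj_mem (hrange p)

/-- If `E` is the trace-preserving conditional expectation onto a unital *-subalgebra `S`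
of `Matrix n n ℂ` satisfying the Pimsner–Popa inequality `E(x) ≥ λ x` for PSD `x`
(with `λ > 0`), then any projection `p` with `E(p) ≤ c p` for some `c > 0` lies in `S`. -/
theorem stmt17 (S : StarSubalgebra ℂ (Matrix n n ℂ)) (E : Module.End ℂ (Matrix n n ℂ))
    (hrange : ∀ x, E x ∈ S) (hfix : ∀ x ∈ S, E x = x)
    (hEpos : ∀ x : Matrix n n ℂ, x.PosSemidef → (E x).PosSemidef)
    (htr : ∀ x, (E x).trace = x.trace)
    (lam : ℝ) (hlam : 0 < lam)
    (hPP : ∀ y : Matrix n n ℂ, y.PosSemidef → (E y - (lam : ℂ) • y).PosSemidef)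
    (p : Matrix n n ℂ) (hp : p.IsHermitian) (hpp : p * p = p)
    (c : ℝ) (hc : 0 < c) (hle : ((c : ℂ) • p - E p).PosSemidef) :
    p ∈ S :=
  stmt17_general S E hrange lam hlam hPP p hp hpp c hle
end

section
/- Let p_max be the supremum of the range projections of all positive fixed points of a contractive completely positive map Φ on Matrix n n ℂ with spectral radius 1. Then the Cesàro average ζ = lim (1/N)∑_{i=0}^{N-1} Φ^i(p_max) (which exists in finite dimensions) is a positive fixed point of Φ whose range projection equals p_max. -/
/-!
Positivity of `Φ` makes every Cesàro mean of `pm` positive, hence `ζ ≥ 0`. A limit of Cesàro means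
of a continuous linear map `T` is `T`-fixed, because `T` maps the `N`-th mean of `x` to
`(1 + 1/N)` times the `(N+1)`-st mean minus `x/N`. So `ζ` is a positive fixed point, and `pm ζ = ζ`
because `pm` dominates its range projection. Conversely, a positive fixed point `x` supported
under `pm` satisfies `x ≤ ‖x‖ pm`, hence `x = Φⁱ x ≤ ‖x‖ Φⁱ pm` for all `i` and, averaging,
`x ≤ ‖x‖ ζ`. As `0 ≤ x ≤ y` and `e y = 0` force `e x = 0`, every projection `q` with `q ζ = ζ`
fixes `x`, and minimality of `pm` gives `pm ≤ q`.
-/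

open Matrix Complex ComplexOrder Filter

variable {n : Type*} [Fintype n] [DecidableEq n]

/-- `r` is the range projection of `x`: the smallest projection with `r x = x`. -/
def IsRangeProj (x r : Matrix n n ℂ) : Prop :=
  r.IsHermitian ∧ r * r = r ∧ r * x = x ∧
    ∀ q : Matrix n n ℂ, q.IsHermitian → q * q = q → q * x = x → r * q = r

section CesaroMean

variable {R M : Type*} [Semifield R] [AddCommMonoid M] [Module R M]

def cesaroMean (T : Module.End R M) (N : ℕ) : Module.End R M :=
  (N : R)⁻¹ • ∑ i ∈ Finset.range N, T ^ i

theorem cesaroMean_apply (T : Module.End R M) (N : ℕ) (x : M) :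
    cesaroMean T N x = (N : R)⁻¹ • ∑ i ∈ Finset.range N, (T ^ i) x := by
  simp [cesaroMean, LinearMap.sum_apply]

theorem cesaroMean_apply_of_apply_eq [CharZero R] {T : Module.End R M} {x : M} (hx : T x = x)
    {N : ℕ} (hN : N ≠ 0) : cesaroMean T N x = x := by
  have hpow : ∀ i, (T ^ i) x = x := fun i => by
    rw [Module.End.pow_apply, Function.iterate_fixed hx]
  rw [cesaroMean_apply, Finset.sum_congr rfl fun i _ => hpow i, Finset.sum_const,
    Finset.card_range, ← Nat.cast_smul_eq_nsmul R, inv_smul_smul₀ (Nat.cast_ne_zero.2 hN)]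

end CesaroMean

theorem mul_cesaroMean {R M : Type*} [Field R] [CharZero R] [AddCommGroup M] [Module R M]
    {T : Module.End R M} {N : ℕ} (hN : N ≠ 0) :
    T * cesaroMean T N = (1 + (N : R)⁻¹) • cesaroMean T (N + 1) - (N : R)⁻¹ • 1 := by
  have hN1 : ((N + 1 : ℕ) : R) ≠ 0 := Nat.cast_ne_zero.2 N.succ_ne_zero
  have hcoef : 1 + (N : R)⁻¹ = (N : R)⁻¹ * ((N + 1 : ℕ) : R) := by
    push_cast; field_simp
  rw [cesaroMean, cesaroMean, geom_sum_succ, hcoef, mul_smul, smul_inv_smul₀ hN1, mul_smul_comm,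
    ← smul_sub, add_sub_cancel_right]

theorem apply_eq_of_tendsto_cesaroMean {𝕜 E : Type*} [RCLike 𝕜] [AddCommGroup E] [Module 𝕜 E]
    [TopologicalSpace E] [IsTopologicalAddGroup E] [ContinuousSMul 𝕜 E] [T2Space E]
    {T : Module.End 𝕜 E} (hT : Continuous T) {x ζ : E}
    (h : Tendsto (cesaroMean T · x) atTop (nhds ζ)) : T ζ = ζ := by
  have hinv : Tendsto (fun N : ℕ => (N : 𝕜)⁻¹) atTop (nhds 0) := tendsto_inv_atTop_nhds_zero_nat
  have hrhs : Tendsto (fun N : ℕ => (1 + (N : 𝕜)⁻¹) • cesaroMean T (N + 1) x - (N : 𝕜)⁻¹ • x)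
      atTop (nhds ((1 + 0 : 𝕜) • ζ - (0 : 𝕜) • x)) :=
    ((tendsto_const_nhds.add hinv).smul (h.comp (tendsto_add_atTop_nat 1))).sub
      (hinv.smul_const x)
  rw [add_zero, one_smul, zero_smul, sub_zero] at hrhs
  refine tendsto_nhds_unique ((hT.tendsto ζ).comp h) (hrhs.congr' ?_)
  filter_upwards [eventually_ne_atTop 0] with N hN
  simp [← Module.End.mul_apply, mul_cesaroMean hN]

namespace IsCompletelyPositive

variable {ι : Type*} {Φ Ψ : Matrix ι ι ℂ →ₗ[ℂ] Matrix ι ι ℂ}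

theorem one : IsCompletelyPositive (1 : Matrix ι ι ℂ →ₗ[ℂ] Matrix ι ι ℂ) := fun _ _ hA => hA

theorem mul (hΦ : IsCompletelyPositive Φ) (hΨ : IsCompletelyPositive Ψ) :
    IsCompletelyPositive (Φ * Ψ) := fun m A hA => hΦ m _ (hΨ m A hA)

theorem pow (hΦ : IsCompletelyPositive Φ) (k : ℕ) : IsCompletelyPositive (Φ ^ k) := by
  induction k with
  | zero => exact one
  | succ k ih => exact pow_succ Φ k ▸ ih.mul hΦ

theorem posSemidef_apply_s19 (hΦ : IsCompletelyPositive Φ) {x : Matrix ι ι ℂ} (hx : x.PosSemidef) :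
    (Φ x).PosSemidef :=
  (hΦ 1 (x.submatrix Prod.snd Prod.snd) (hx.submatrix _)).submatrix fun i => ((0 : Fin 1), i)

open scoped MatrixOrder

variable [Fintype ι] [DecidableEq ι]

theorem nonneg_cesaroMean_apply (hΦ : IsCompletelyPositive Φ) {x : Matrix ι ι ℂ} (hx : 0 ≤ x)
    (N : ℕ) : 0 ≤ cesaroMean Φ N x := by
  rw [cesaroMean_apply]
  refine smul_nonneg (by positivity) (Finset.sum_nonneg fun i _ => ?_)
  exact nonneg_iff_posSemidef.2 ((hΦ.pow i).posSemidef_apply_s19 (nonneg_iff_posSemidef.1 hx))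

theorem le_of_tendsto_cesaroMean (hΦ : IsCompletelyPositive Φ) {x y ζ : Matrix ι ι ℂ}
    (hy : Φ y = y) (hyx : y ≤ x) (h : Tendsto (cesaroMean Φ · x) atTop (nhds ζ)) : y ≤ ζ := by
  -- the positive cone is closed since matrices with the operator norm form a C⋆-algebra
  open scoped Matrix.Norms.L2Operator in
  refine ge_of_tendsto h ?_
  filter_upwards [eventually_ne_atTop 0] with N hN
  have := hΦ.nonneg_cesaroMean_apply (sub_nonneg.2 hyx) N
  rwa [map_sub, cesaroMean_apply_of_apply_eq hy hN, sub_nonneg] at this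

end IsCompletelyPositive

section CStarAlgebra

variable {A : Type*} [CStarAlgebra A] [PartialOrder A] [StarOrderedRing A]

theorem le_norm_smul_of_mul_eq {x p : A} (hx : 0 ≤ x) (hp : IsStarProjection p)
    (hpx : p * x = x) : x ≤ ‖x‖ • p := by
  have hp' : star p = p := hp.isSelfAdjoint.star_eq
  have hxp : x * p = x := by
    simpa [hp', (IsSelfAdjoint.of_nonneg hx).star_eq] using congr_arg star hpx
  calc x = star p * x * p := by rw [hp', hpx, hxp]
    _ ≤ star p * algebraMap ℝ A ‖x‖ * p :=
      star_left_conjugate_le_conjugate (IsSelfAdjoint.of_nonneg hx).le_algebraMap_norm_self p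
    _ = ‖x‖ • p := by
      rw [Algebra.algebraMap_eq_smul_one, mul_smul_comm, mul_one, smul_mul_assoc, hp',
        hp.isIdempotentElem.eq]

theorem mul_eq_zero_of_le {x y e : A} (hx : 0 ≤ x) (hxy : x ≤ y) (hey : e * y = 0) :
    e * x = 0 := by
  have hconj : e * x * star e = 0 := le_antisymm
    (by simpa [hey] using star_right_conjugate_le_conjugate hxy e)
    (star_right_conjugate_nonneg hx e)
  have hsq : CFC.sqrt x * CFC.sqrt x = x := CFC.sqrt_mul_sqrt_self x hx
  have hes : e * CFC.sqrt x = 0 := by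
    rw [← CStarRing.mul_star_self_eq_zero_iff, star_mul, (CFC.sqrt_nonneg x).isSelfAdjoint.star_eq,
      mul_assoc, ← mul_assoc (CFC.sqrt x), hsq, ← mul_assoc, hconj]
  rw [← hsq, ← mul_assoc, hes, zero_mul]

end CStarAlgebra

section RangeProjection

variable {ι : Type*} [Fintype ι]

theorem IsRangeProj.mul_eq_self_iff {x r q : Matrix ι ι ℂ} (h : IsRangeProj x r)
    (hq : q.IsHermitian) (hq2 : q * q = q) : q * r = r ↔ q * x = x := by
  refine ⟨fun hqr => ?_, fun hqx => ?_⟩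
  · rw [← h.2.2.1, ← Matrix.mul_assoc, hqr]
  · simpa [conjTranspose_mul, h.1.eq, hq.eq] using congr_arg conjTranspose (h.2.2.2 q hq hq2 hqx)

variable [DecidableEq ι]

theorem exists_isRangeProj {x : Matrix ι ι ℂ} (hx : x.IsHermitian) : ∃ r, IsRangeProj x r := by
  have hfin : (spectrum ℝ x).Finite := hx.spectrum_real_eq_range_eigenvalues ▸ Set.finite_range _
  have hmul (f g : ℝ → ℝ) : cfc f x * cfc g x = cfc (fun t => f t * g t) x :=
    (cfc_mul f g x (hfin.continuousOn f) (hfin.continuousOn g)).symm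
  have hid : cfc (fun t : ℝ => t) x = x := cfc_id' ℝ x hx.isSelfAdjoint
  -- `t * t⁻¹` is the indicator function of `t ≠ 0`, since `0⁻¹ = 0`
  have hsupp (t : ℝ) : t * t⁻¹ * (t * t⁻¹) = t * t⁻¹ ∧ t * t⁻¹ * t = t := by
    by_cases ht : t = 0 <;> simp [ht]
  have hrH : (cfc (fun t : ℝ => t * t⁻¹) x).IsHermitian := cfc_predicate _ x
  refine ⟨_, hrH, ?_, ?_, fun q hq _ hqx => ?_⟩
  · rw [hmul]
    exact cfc_congr fun t _ => (hsupp t).1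
  · calc cfc (fun t : ℝ => t * t⁻¹) x * x
          = cfc (fun t : ℝ => t * t⁻¹) x * cfc (fun t => t) x := by rw [hid]
      _ = cfc (fun t => t) x := by
          rw [hmul]
          exact cfc_congr fun t _ => (hsupp t).2
      _ = x := hid
  · have hqr : q * cfc (fun t : ℝ => t * t⁻¹) x = cfc (fun t : ℝ => t * t⁻¹) x := by
      rw [← hmul (fun t => t), hid, ← Matrix.mul_assoc, hqx]
    simpa [conjTranspose_mul, hq.eq, hrH.eq] using congr_arg conjTranspose hqr

end RangeProjection

open scoped MatrixOrder Matrix.Norms.L2Operator in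
theorem IsCompletelyPositive.mul_eq_self_of_tendsto_cesaroMean {ι : Type*} [Fintype ι]
    [DecidableEq ι] {Φ : Matrix ι ι ℂ →ₗ[ℂ] Matrix ι ι ℂ} (hΦ : IsCompletelyPositive Φ)
    {p ζ x q : Matrix ι ι ℂ} (hp : IsStarProjection p)
    (h : Tendsto (cesaroMean Φ · p) atTop (nhds ζ)) (hx : x.PosSemidef) (hxΦ : Φ x = x)
    (hpx : p * x = x) (hqζ : q * ζ = ζ) : q * x = x := by
  have hx₀ : 0 ≤ x := nonneg_iff_posSemidef.2 hx
  have hxζ : x ≤ ‖x‖ • ζ := hΦ.le_of_tendsto_cesaroMean hxΦ (le_norm_smul_of_mul_eq hx₀ hp hpx)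
    (by simpa only [LinearMap.map_smul_of_tower] using h.const_smul ‖x‖)
  have h1q : (1 - q) * x = 0 := mul_eq_zero_of_le hx₀ hxζ (by
    rw [mul_smul_comm, Matrix.sub_mul, Matrix.one_mul, hqζ, sub_self, smul_zero])
  rwa [Matrix.sub_mul, Matrix.one_mul, sub_eq_zero, eq_comm] at h1q

theorem stmt19_general (Φ : Module.End ℂ (Matrix n n ℂ))
    (hcp : IsCompletelyPositive Φ)
    (pm : Matrix n n ℂ) (hpmH : pm.IsHermitian) (hpmP : pm * pm = pm)
    -- `pm` dominates the range projection of every positive fixed point: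
    (hpm_ub : ∀ x r : Matrix n n ℂ, x.PosSemidef → Φ x = x → IsRangeProj x r → pm * r = r)
    -- and `pm` is the least projection doing so:
    (hpm_lub : ∀ q : Matrix n n ℂ, q.IsHermitian → q * q = q →
      (∀ x r : Matrix n n ℂ, x.PosSemidef → Φ x = x → IsRangeProj x r → q * r = r) →
      pm * q = pm)
    (ζ : Matrix n n ℂ)
    (hζ : Tendsto (fun N : ℕ => (N : ℂ)⁻¹ • ∑ i ∈ Finset.range N, (Φ ^ i) pm)
      atTop (nhds ζ)) :
    ζ.PosSemidef ∧ Φ ζ = ζ ∧ IsRangeProj ζ pm := by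
  have hlim : Tendsto (cesaroMean Φ · pm) atTop (nhds ζ) := by
    simpa only [cesaroMean_apply] using hζ
  have hpm : IsStarProjection pm := ⟨hpmP, hpmH⟩
  have hpos : ζ.PosSemidef := by
    open scoped MatrixOrder in
    exact nonneg_iff_posSemidef.1 (hcp.le_of_tendsto_cesaroMean (map_zero Φ) hpm.nonneg hlim)
  have hfix : Φ ζ = ζ :=
    apply_eq_of_tendsto_cesaroMean (LinearMap.continuous_of_finiteDimensional Φ) hlim
  obtain ⟨r, hr⟩ := exists_isRangeProj hpos.isHermitian
  refine ⟨hpos, hfix, hpmH, hpmP, (hr.mul_eq_self_iff hpmH hpmP).1 (hpm_ub ζ r hpos hfix hr),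
    fun q hqH hq2 hqζ => hpm_lub q hqH hq2 fun x r' hx hxΦ hr' => ?_⟩
  have hpmx : pm * x = x := (hr'.mul_eq_self_iff hpmH hpmP).1 (hpm_ub x r' hx hxΦ hr')
  exact (hr'.mul_eq_self_iff hqH hq2).2
    (hcp.mul_eq_self_of_tendsto_cesaroMean hpm hlim hx hxΦ hpmx hqζ)

/-- Let `pm` be the supremum of the range projections of the positive fixed points of a
contractive completely positive map `Φ` with spectral radius `1`. Then the Cesàro average
`ζ = lim (1/N) ∑_{i<N} Φ^i(pm)` is a positive fixed point of `Φ` whose range projection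
is `pm`. -/
theorem stmt19 (Φ : Module.End ℂ (Matrix n n ℂ))
    (hcp : IsCompletelyPositive Φ)
    (hcontr : ((1 : Matrix n n ℂ) - Φ 1).PosSemidef)
    (hrad : IsGreatest {t : ℝ | ∃ μ ∈ spectrum ℂ Φ, t = ‖μ‖} 1)
    (pm : Matrix n n ℂ) (hpmH : pm.IsHermitian) (hpmP : pm * pm = pm)
    -- `pm` dominates the range projection of every positive fixed point:
    (hpm_ub : ∀ x r : Matrix n n ℂ, x.PosSemidef → Φ x = x → IsRangeProj x r → pm * r = r)
    -- and `pm` is the least projection doing so: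
    (hpm_lub : ∀ q : Matrix n n ℂ, q.IsHermitian → q * q = q →
      (∀ x r : Matrix n n ℂ, x.PosSemidef → Φ x = x → IsRangeProj x r → q * r = r) →
      pm * q = pm)
    (ζ : Matrix n n ℂ)
    (hζ : Tendsto (fun N : ℕ => (N : ℂ)⁻¹ • ∑ i ∈ Finset.range N, (Φ ^ i) pm)
      atTop (nhds ζ)) :
    ζ.PosSemidef ∧ Φ ζ = ζ ∧ IsRangeProj ζ pm :=
  stmt19_general Φ hcp pm hpmH hpmP hpm_ub hpm_lub ζ hζ
end
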